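/- Linear program for the optimal expected waiting time for two elementary links: in the two-elementary-link MDP, the infimum, over decision functions d on the transient states under which absorption into the states {1}×{−1,…,m₁*}×{−1,…,m₂*} occurs with probability one, of the expected time to absorption starting from the initial distribution |0⟩⊗|g_{p₁}⟩⊗|g_{p₂}⟩ — i.e., of ⟨γ|(I − Q^d)^{−1}|g_{p₁}⟩⊗|g_{p₂}⟩ where Q^d := ∑_{a∈A} T^a_{0→0} D_a (D_a the diagonal matrix of probabilities d(0,m₁,m₂)(a)) and |γ⟩ is the all-ones vector — equals the optimal value of the linear program: minimize ⟨γ|x⟩ over vectors x, w_a (a ∈ A) of dimension (m₁*+2)(m₂*+2), subject to the componentwise constraints 0 ≤ w_a ≤ x for all a ∈ A, x − ∑_{a∈A} T^a_{0→0} w_a = |g_{p₁}⟩⊗|g_{p₂}⟩, and ∑_{a∈A} w_a = x. Moreover, every feasible point defines a stationary policy via d(0,m₁,m₂)(a) = ⟨0,m₁,m₂|w_a⟩/⟨0,m₁,m₂|x⟩ whenever the denominator is nonzero. -/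

import Mathlib

open BigOperators Filter Matrix

noncomputable section

/-- The five actions of the two-elementary-link MDP: keep/regenerate each link,
or perform entanglement swapping (`swap` = `⋈`). -/
inductive Act | a00 | a01 | a10 | a11 | swap
deriving DecidableEq

instance instFintypeAct : Fintype Act where
  elems := {.a00, .a01, .a10, .a11, .swap}
  complete := fun x => by cases x <;> simp

/-- Single-link "wait" transition matrix `T_j⁰` on the state space
`{-1, 0, …, m_j*}`, encoded as `Fin (m_j* + 2)` with index `0 ↦ -1` and
index `k+1 ↦` memory time `k`. -/
def Tw (ms : ℕ) : Matrix (Fin (ms + 2)) (Fin (ms + 2)) ℝ :=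
  Matrix.of fun s' s =>
    if (s : ℕ) = 0 then (if (s' : ℕ) = 0 then 1 else 0)
    else if (s : ℕ) = ms + 1 then (if (s' : ℕ) = 0 then 1 else 0)
    else if (s' : ℕ) = (s : ℕ) + 1 then 1 else 0

/-- Single-link "request" transition matrix `T_j¹`. -/
def Tr (ms : ℕ) (p : ℝ) : Matrix (Fin (ms + 2)) (Fin (ms + 2)) ℝ :=
  Matrix.of fun s' _ => if (s' : ℕ) = 0 then 1 - p else if (s' : ℕ) = 1 then p else 0

/-- The vector `|g_p⟩ = (1-p)|-1⟩ + p|0⟩`. -/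
def gvec (ms : ℕ) (p : ℝ) : Fin (ms + 2) → ℝ :=
  fun s => if (s : ℕ) = 0 then 1 - p else if (s : ℕ) = 1 then p else 0

/-- The vector `|γ_j⁺⟩ = ∑_{m=0}^{m_j*} |m⟩`. -/
def gammaPlus (ms : ℕ) : Fin (ms + 2) → ℝ := fun s => if (s : ℕ) = 0 then 0 else 1

/-- The projector `𝟙_j⁺ = ∑_{m=0}^{m_j*} |m⟩⟨m|`. -/
def idPlus (ms : ℕ) : Matrix (Fin (ms + 2)) (Fin (ms + 2)) ℝ :=
  Matrix.of fun s' s => if s' = s ∧ (s : ℕ) ≠ 0 then 1 else 0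

/-- The shift `S_j = ∑_{m=0}^{m_j*-1} |m+1⟩⟨m|`. -/
def shiftS (ms : ℕ) : Matrix (Fin (ms + 2)) (Fin (ms + 2)) ℝ :=
  Matrix.of fun s' s =>
    if (s' : ℕ) = (s : ℕ) + 1 ∧ 1 ≤ (s : ℕ) ∧ (s : ℕ) ≤ ms then 1 else 0

/-- The pair-of-memory-times state space. -/
abbrev TwoV (m1 m2 : ℕ) := Fin (m1 + 2) × Fin (m2 + 2)

/-- The transient-to-transient blocks `T^a_{0→0}` of the five transition matrices. -/
def Tzz (m1 m2 : ℕ) (p1 p2 q : ℝ) : Act → Matrix (TwoV m1 m2) (TwoV m1 m2) ℝ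
  | .a00 => Matrix.of fun v' v => Tw m1 v'.1 v.1 * Tw m2 v'.2 v.2
  | .a01 => Matrix.of fun v' v => Tw m1 v'.1 v.1 * Tr m2 p2 v'.2 v.2
  | .a10 => Matrix.of fun v' v => Tr m1 p1 v'.1 v.1 * Tw m2 v'.2 v.2
  | .a11 => Matrix.of fun v' v => Tr m1 p1 v'.1 v.1 * Tr m2 p2 v'.2 v.2
  | .swap => Matrix.of fun v' v =>
      (1 - q) * (gvec m1 p1 v'.1 * gvec m2 p2 v'.2) * (gammaPlus m1 v.1 * gammaPlus m2 v.2)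
      + shiftS m1 v'.1 v.1 * (if (v'.2 : ℕ) = 0 ∧ (v.2 : ℕ) = 0 then 1 else 0)
      + (if (v'.1 : ℕ) = 0 ∧ (v.1 : ℕ) = 0 then 1 else 0) * shiftS m2 v'.2 v.2
      + (if (v'.1 : ℕ) = 0 ∧ (v'.2 : ℕ) = 0 ∧ (v.1 : ℕ) = 0 ∧ (v.2 : ℕ) = 0 then 1 else 0)
      + (if (v'.1 : ℕ) = 0 ∧ (v'.2 : ℕ) = 0 ∧ (v.1 : ℕ) = 0 ∧ (v.2 : ℕ) = m2 + 1 then 1 else 0)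
      + (if (v'.1 : ℕ) = 0 ∧ (v'.2 : ℕ) = 0 ∧ (v.1 : ℕ) = m1 + 1 ∧ (v.2 : ℕ) = 0 then 1 else 0)

/-- The transient-to-absorbing blocks `T^a_{0→1}`: zero except for the swap action,
where it is `q 𝟙₁⁺ ⊗ 𝟙₂⁺`. -/
def Tzo (m1 m2 : ℕ) (q : ℝ) : Act → Matrix (TwoV m1 m2) (TwoV m1 m2) ℝ
  | .swap => Matrix.of fun v' v => q * idPlus m1 v'.1 v.1 * idPlus m2 v'.2 v.2
  | _ => 0

/-- `d` is a valid decision function on the transient states. -/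
def ValidDec {m1 m2 : ℕ} (d : TwoV m1 m2 → Act → ℝ) : Prop :=
  (∀ v a, 0 ≤ d v a) ∧ ∀ v, ∑ a : Act, d v a = 1

/-- The transient block `Q^d` of the induced chain. -/
def Qmat (m1 m2 : ℕ) (p1 p2 q : ℝ) (d : TwoV m1 m2 → Act → ℝ) :
    Matrix (TwoV m1 m2) (TwoV m1 m2) ℝ :=
  Matrix.of fun v' v => ∑ a : Act, Tzz m1 m2 p1 p2 q a v' v * d v a

/-- The transient-to-absorbing block `R^d` of the induced chain. -/
def Rmat (m1 m2 : ℕ) (q : ℝ) (d : TwoV m1 m2 → Act → ℝ) :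
    Matrix (TwoV m1 m2) (TwoV m1 m2) ℝ :=
  Matrix.of fun v' v => ∑ a : Act, Tzo m1 m2 q a v' v * d v a

/-- The initial distribution `|g_{p₁}⟩ ⊗ |g_{p₂}⟩` on the transient block. -/
def ginit (m1 m2 : ℕ) (p1 p2 : ℝ) : TwoV m1 m2 → ℝ :=
  fun v => gvec m1 p1 v.1 * gvec m2 p2 v.2

/-- Feasibility for the linear program of Theorem 6 (optimal expected waiting time for
two elementary links). -/
def Feas11 (m1 m2 : ℕ) (p1 p2 q : ℝ) (x : TwoV m1 m2 → ℝ)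
    (w : Act → TwoV m1 m2 → ℝ) : Prop :=
  (∀ a s, 0 ≤ w a s ∧ w a s ≤ x s) ∧
  (∀ s', x s' - ∑ a : Act, (Tzz m1 m2 p1 p2 q a).mulVec (w a) s' = ginit m1 m2 p1 p2 s') ∧
  (∀ s, ∑ a : Act, w a s = x s)

/-!
A policy `d` with `Q^k → 0` yields the feasible point `x = (1 - Q)⁻¹ g = ∑ₖ Qᵏ g`, `w_a = d_a x`
with the same objective. Conversely, a feasible `(x, w)` satisfies `x = g + Q₀ x` for the policy
`Q₀ = w / x`, so every partial sum `∑_{k<n} Q₀ᵏ g` is bounded by `x`. Hence the mass started from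
`g` is eventually absorbed, and every state reachable from `g` under `Q₀` leaks. Elsewhere `Q₀` is
replaced by the uniform rule, which reaches the state where both links are fresh and a swap can
succeed; this needs `p₁, p₂, q > 0`, which weak duality extracts from feasibility. The resulting
substochastic `Q` has `Q^k → 0` and `(1 - Q)⁻¹ g = ∑ₖ Q₀ᵏ g ≤ x`.
-/
open Finset Topology

namespace Matrix

variable {V : Type*} [Fintype V] {A : Matrix V V ℝ}

lemma mulVec_mono (hA : ∀ i j, 0 ≤ A i j) {x y : V → ℝ} (h : x ≤ y) : A *ᵥ x ≤ A *ᵥ y :=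
  fun i => sum_le_sum fun j _ => mul_le_mul_of_nonneg_left (h j) (hA i j)

lemma vecMul_mono (hA : ∀ i j, 0 ≤ A i j) {x y : V → ℝ} (h : x ≤ y) : x ᵥ* A ≤ y ᵥ* A :=
  fun j => sum_le_sum fun i _ => mul_le_mul_of_nonneg_right (h i) (hA i j)

lemma mulVec_nonneg (hA : ∀ i j, 0 ≤ A i j) {x : V → ℝ} (hx : 0 ≤ x) : 0 ≤ A *ᵥ x := by
  simpa using mulVec_mono hA hx

lemma vecMul_nonneg (hA : ∀ i j, 0 ≤ A i j) {x : V → ℝ} (hx : 0 ≤ x) : 0 ≤ x ᵥ* A := by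
  simpa using vecMul_mono hA hx

lemma one_vecMul_apply (j : V) : (1 ᵥ* A) j = ∑ i, A i j := by
  simp [vecMul, dotProduct]

lemma apply_le_one_vecMul (hA : ∀ i j, 0 ≤ A i j) (i j : V) : A i j ≤ (1 ᵥ* A) j := by
  rw [one_vecMul_apply]
  exact single_le_sum (fun i _ => hA i j) (mem_univ i)

lemma dotProduct_nonpos_of_le_vecMul {ι : Type*} [Fintype ι] {T : ι → Matrix V V ℝ}
    {x g φ : V → ℝ} {w : ι → V → ℝ} (hw : ∀ a, 0 ≤ w a) (hx : ∑ a, w a = x)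
    (hbal : x - ∑ a, T a *ᵥ w a = g) (hφ : ∀ a, φ ≤ φ ᵥ* T a) : φ ⬝ᵥ g ≤ 0 := by
  have h : φ ⬝ᵥ g = -∑ a, (φ ᵥ* T a - φ) ⬝ᵥ w a := by
    simp only [← hbal, ← hx, dotProduct_sub, dotProduct_sum, sub_dotProduct, dotProduct_mulVec,
      sum_sub_distrib, neg_sub]
  rw [h, neg_nonpos]
  exact sum_nonneg fun a _ => dotProduct_nonneg_of_nonneg (sub_nonneg.2 (hφ a)) (hw a)

variable [DecidableEq V]

lemma one_vecMul_pow_le_one (hA : ∀ i j, 0 ≤ A i j) (hcol : 1 ᵥ* A ≤ 1) (k : ℕ) :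
    1 ᵥ* A ^ k ≤ 1 := by
  induction k with
  | zero => simp
  | succ k ih => rw [pow_succ, ← vecMul_vecMul]; exact (vecMul_mono hA ih).trans hcol

lemma antitone_one_vecMul_pow (hA : ∀ i j, 0 ≤ A i j) (hcol : 1 ᵥ* A ≤ 1) :
    Antitone fun k => 1 ᵥ* A ^ k :=
  antitone_nat_of_succ_le fun k => by
    rw [pow_succ', ← vecMul_vecMul]
    exact vecMul_mono (pow_apply_nonneg hA k) hcol

theorem tendsto_pow_atTop_nhds_zero_of_one_vecMul (hA : ∀ i j, 0 ≤ A i j)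
    (hcol : 1 ᵥ* A ≤ 1) (hleak : ∀ j, ∃ k, (1 ᵥ* A ^ k) j < 1) :
    Tendsto (A ^ ·) atTop (𝓝 0) := by
  choose k hk using hleak
  have hK : ∀ j, (1 ᵥ* A ^ univ.sup k) j < 1 := fun j =>
    (antitone_one_vecMul_pow hA hcol (le_sup (mem_univ j)) j).trans_lt (hk j)
  obtain ⟨β, hβ1, hβ⟩ : ∃ β : ℝ, β < 1 ∧ 1 ᵥ* A ^ univ.sup k ≤ β • 1 := by
    rcases isEmpty_or_nonempty V with hV | hV
    · exact ⟨0, one_pos, fun j => isEmptyElim j⟩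
    · obtain ⟨j₀, hj₀⟩ := Finite.exists_max (1 ᵥ* A ^ univ.sup k)
      exact ⟨_, hK j₀, fun j => by simpa using hj₀ j⟩
  -- the total mass `s n = ∑ i j, (A ^ n) i j` contracts by `β` every `univ.sup k` steps
  set s : ℕ → ℝ := fun n => 1 ᵥ* A ^ n ⬝ᵥ 1
  have hs0 : ∀ n, 0 ≤ s n := fun n =>
    dotProduct_nonneg_of_nonneg (vecMul_nonneg (pow_apply_nonneg hA n) zero_le_one) zero_le_one
  have hs_anti : Antitone s := fun m n hmn =>
    dotProduct_le_dotProduct_of_nonneg_right (antitone_one_vecMul_pow hA hcol hmn) zero_le_one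
  have hs_step : ∀ n, s (n + univ.sup k) ≤ β * s n := fun n => by
    calc s (n + univ.sup k) = (1 ᵥ* A ^ univ.sup k) ⬝ᵥ (A ^ n *ᵥ 1) := by
          rw [← dotProduct_mulVec, mulVec_mulVec, ← pow_add, add_comm, dotProduct_mulVec]
      _ ≤ (β • 1) ⬝ᵥ (A ^ n *ᵥ 1) := dotProduct_le_dotProduct_of_nonneg_right hβ
          (mulVec_nonneg (pow_apply_nonneg hA n) zero_le_one)
      _ = β * s n := by
          rw [smul_dotProduct, dotProduct_mulVec, smul_eq_mul]
  have hs : Tendsto s atTop (𝓝 0) := by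
    have hL := tendsto_atTop_ciInf hs_anti ⟨0, Set.forall_mem_range.2 hs0⟩
    have hL0 : 0 ≤ ⨅ n, s n := ge_of_tendsto' hL hs0
    have hLβ : ⨅ n, s n ≤ β * ⨅ n, s n :=
      le_of_tendsto_of_tendsto' (hL.comp (tendsto_add_atTop_nat _)) (hL.const_mul β) hs_step
    rwa [show ⨅ n, s n = 0 by nlinarith] at hL
  refine tendsto_pi_nhds.2 fun i => tendsto_pi_nhds.2 fun j => ?_
  refine squeeze_zero (fun n => pow_apply_nonneg hA n i j) (fun n => ?_) hs
  calc (A ^ n) i j ≤ (1 ᵥ* A ^ n) j := apply_le_one_vecMul (pow_apply_nonneg hA n) i j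
    _ ≤ s n := by
      rw [show s n = ∑ j, (1 ᵥ* A ^ n) j from dotProduct_one _]
      exact single_le_sum (fun j _ => vecMul_nonneg (pow_apply_nonneg hA n) zero_le_one j)
        (mem_univ j)

lemma one_vecMul_pow_succ_lt_one (hA : ∀ i j, 0 ≤ A i j) (hcol : 1 ᵥ* A ≤ 1) {k : ℕ} {i j : V}
    (hi : (1 ᵥ* A ^ k) i < 1) (hij : 0 < A i j) : (1 ᵥ* A ^ (k + 1)) j < 1 := by
  rw [pow_succ, ← vecMul_vecMul]
  set c := 1 ᵥ* A ^ k
  have hc : (0 : V → ℝ) ≤ 1 - c := sub_nonneg.2 (one_vecMul_pow_le_one hA hcol k)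
  have hleak : (1 - c i) * A i j ≤ ((1 - c) ᵥ* A) j :=
    single_le_sum (f := fun l => (1 - c) l * A l j) (fun l _ => mul_nonneg (hc l) (hA l j))
      (mem_univ i)
  have hpos : 0 < (1 - c i) * A i j := mul_pos (sub_pos.2 hi) hij
  rw [show c = 1 - (1 - c) by abel, sub_vecMul, Pi.sub_apply]
  linarith [show (1 ᵥ* A) j ≤ 1 from hcol j]

lemma exists_one_vecMul_pow_lt_one (hA : ∀ i j, 0 ≤ A i j) {g : V → ℝ} (hg : 0 ≤ g)
    (hmass : Tendsto (fun k => ∑ v, (A ^ k *ᵥ g) v) atTop (𝓝 0)) {k₀ : ℕ} {j : V}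
    (hj : 0 < (A ^ k₀ *ᵥ g) j) : ∃ k, (1 ᵥ* A ^ k) j < 1 := by
  by_contra! h
  have hbound : ∀ k, (A ^ k₀ *ᵥ g) j ≤ ∑ v, (A ^ (k + k₀) *ᵥ g) v := fun k =>
    calc (A ^ k₀ *ᵥ g) j ≤ (1 ᵥ* A ^ k) j * (A ^ k₀ *ᵥ g) j := le_mul_of_one_le_left hj.le (h k)
      _ ≤ (1 ᵥ* A ^ k) ⬝ᵥ (A ^ k₀ *ᵥ g) :=
        single_le_sum (f := fun v => (1 ᵥ* A ^ k) v * (A ^ k₀ *ᵥ g) v)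
          (fun v _ => mul_nonneg (vecMul_nonneg (pow_apply_nonneg hA k) zero_le_one v)
            (mulVec_nonneg (pow_apply_nonneg hA k₀) hg v)) (mem_univ j)
      _ = ∑ v, (A ^ (k + k₀) *ᵥ g) v := by
        rw [← dotProduct_mulVec, one_dotProduct, mulVec_mulVec, pow_add]
  exact hj.not_ge (ge_of_tendsto' (hmass.comp (tendsto_add_atTop_nat k₀)) hbound)

lemma sum_range_pow_mulVec_le (hA : ∀ i j, 0 ≤ A i j) {g x : V → ℝ} (hx : 0 ≤ x)
    (hxg : x = g + A *ᵥ x) (n : ℕ) : ∑ k ∈ range n, A ^ k *ᵥ g ≤ x := by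
  induction n with
  | zero => simpa using hx
  | succ n ih =>
    calc ∑ k ∈ range (n + 1), A ^ k *ᵥ g = g + A *ᵥ ∑ k ∈ range n, A ^ k *ᵥ g := by
          simp only [sum_range_succ', mulVec_sum, mulVec_mulVec, pow_succ', pow_zero,
            one_mulVec, add_comm]
      _ ≤ g + A *ᵥ x := add_le_add le_rfl (mulVec_mono hA ih)
      _ = x := hxg.symm

lemma tendsto_sum_pow_mulVec_of_sum_range_le (hA : ∀ i j, 0 ≤ A i j) {g x : V → ℝ} (hg : 0 ≤ g)
    (h : ∀ n, ∑ k ∈ range n, A ^ k *ᵥ g ≤ x) :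
    Tendsto (fun k => ∑ v, (A ^ k *ᵥ g) v) atTop (𝓝 0) := by
  refine (summable_of_sum_range_le (c := ∑ v, x v)
    (fun k => sum_nonneg fun v _ => mulVec_nonneg (pow_apply_nonneg hA k) hg v)
    (fun n => ?_)).tendsto_atTop_zero
  rw [sum_comm]
  exact sum_le_sum fun v _ => by simpa only [Finset.sum_apply] using h n v

lemma pow_mulVec_le_of_sum_range_le (hA : ∀ i j, 0 ≤ A i j) {g x : V → ℝ} (hg : 0 ≤ g)
    (h : ∀ n, ∑ k ∈ range n, A ^ k *ᵥ g ≤ x) (k : ℕ) : A ^ k *ᵥ g ≤ x :=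
  (single_le_sum (f := fun i => A ^ i *ᵥ g) (fun i _ => mulVec_nonneg (pow_apply_nonneg hA i) hg)
    (self_mem_range_succ k)).trans (h (k + 1))

lemma pow_mulVec_eq_of_col_eq {B : Matrix V V ℝ} {g : V → ℝ}
    (h : ∀ k v, (A ^ k *ᵥ g) v ≠ 0 → ∀ v', B v' v = A v' v) (k : ℕ) :
    B ^ k *ᵥ g = A ^ k *ᵥ g := by
  induction k with
  | zero => rfl
  | succ k ih =>
    rw [pow_succ', ← mulVec_mulVec, ih, pow_succ', ← mulVec_mulVec]
    ext v'
    refine sum_congr rfl fun v _ => ?_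
    by_cases hv : (A ^ k *ᵥ g) v = 0
    · simp [hv]
    · exact congrArg (· * _) (h k v hv v')

lemma isUnit_det_one_sub_of_tendsto_pow (hA : Tendsto (A ^ ·) atTop (𝓝 0)) :
    IsUnit (1 - A).det := by
  have hdet : Tendsto (fun n => (1 - A ^ n).det) atTop (𝓝 1) := by
    simpa [Function.comp_def] using (continuous_id.matrix_det.tendsto _).comp (hA.const_sub 1)
  refine isUnit_iff_ne_zero.2 fun h0 => ?_
  have h : Tendsto (fun _ : ℕ => (0 : ℝ)) atTop (𝓝 1) := by
    simpa only [← mul_neg_geom_sum, det_mul, h0, zero_mul] using hdet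
  exact zero_ne_one (tendsto_nhds_unique tendsto_const_nhds h)

lemma tendsto_geom_sum_of_tendsto_pow (hA : Tendsto (A ^ ·) atTop (𝓝 0)) :
    Tendsto (fun n => ∑ k ∈ range n, A ^ k) atTop (𝓝 (1 - A)⁻¹) := by
  have h := (hA.const_sub 1).const_mul (1 - A)⁻¹
  simp only [sub_zero, mul_one, ← mul_neg_geom_sum,
    nonsing_inv_mul_cancel_left _ _ (isUnit_det_one_sub_of_tendsto_pow hA)] at h
  exact h

lemma tendsto_geom_sum_mulVec_of_tendsto_pow (hA : Tendsto (A ^ ·) atTop (𝓝 0)) (g : V → ℝ) :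
    Tendsto (fun n => ∑ k ∈ range n, A ^ k *ᵥ g) atTop (𝓝 ((1 - A)⁻¹ *ᵥ g)) := by
  simpa only [sum_mulVec, Function.comp_def, id] using
    ((continuous_id.matrix_mulVec (continuous_const (y := g))).tendsto _).comp
      (tendsto_geom_sum_of_tendsto_pow hA)

end Matrix

open Matrix

section Model

variable {m1 m2 : ℕ} {p1 p2 q : ℝ}

lemma sum_fin_ite_zero_one {n : ℕ} (a b : ℝ) :
    ∑ s : Fin (n + 2), (if (s : ℕ) = 0 then a else if (s : ℕ) = 1 then b else 0) = a + b := by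
  simp [Fin.sum_univ_succ (n := n + 1), Fin.sum_univ_succ (n := n)]

lemma sum_fin_ite_val_eq {n : ℕ} (c : ℕ) (f : Fin n → ℝ) :
    ∑ s : Fin n, (if (s : ℕ) = c then f s else 0) = if h : c < n then f ⟨c, h⟩ else 0 := by
  split_ifs with h
  · rw [sum_eq_single ⟨c, h⟩] <;> simp +contextual [Fin.ext_iff]
  · exact sum_eq_zero fun s _ => if_neg (by omega)

lemma gvec_sum (ms : ℕ) (p : ℝ) : ∑ s, gvec ms p s = 1 := by
  simp only [gvec]
  rw [sum_fin_ite_zero_one]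
  ring

lemma one_vecMul_Tzz (a : Act) (v : TwoV m1 m2) :
    (1 ᵥ* Tzz m1 m2 p1 p2 q a) v =
      1 - if a = .swap ∧ 1 ≤ (v.1 : ℕ) ∧ 1 ≤ (v.2 : ℕ) then q else 0 := by
  obtain ⟨⟨i, hi⟩, ⟨j, hj⟩⟩ := v
  rw [one_vecMul_apply, Fintype.sum_prod_type]
  cases a <;> simp only [Tzz, Tw, Tr, shiftS, gammaPlus, of_apply, sum_add_distrib, ite_and,
    ← mul_sum, ← sum_mul, mul_assoc, gvec_sum, sum_fin_ite_zero_one, ite_mul, zero_mul, one_mul,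
    sum_ite_irrel, sum_const_zero, sum_fin_ite_val_eq] <;>
    split_ifs <;> first | ring1 | (exfalso; omega)

lemma Tzz_nonneg (hp1 : 0 ≤ p1 ∧ p1 ≤ 1) (hp2 : 0 ≤ p2 ∧ p2 ≤ 1) (hq : 0 ≤ q ∧ q ≤ 1)
    (a : Act) (v' v : TwoV m1 m2) : 0 ≤ Tzz m1 m2 p1 p2 q a v' v := by
  have hp1' := sub_nonneg.2 hp1.2
  have hp2' := sub_nonneg.2 hp2.2
  have hq' := sub_nonneg.2 hq.2
  cases a <;> simp only [Tzz, Tw, Tr, gvec, gammaPlus, shiftS, of_apply] <;>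
    apply_rules [add_nonneg, mul_nonneg, ite_nonneg, zero_le_one, le_refl, hp1.1, hp2.1]

lemma Tzz_eq_zero_of_p1_eq_zero (a : Act) {v' v : TwoV m1 m2} (hv : v.1 = 0)
    (hv' : v'.1 ≠ 0) : Tzz m1 m2 0 p2 q a v' v = 0 := by
  cases a <;> simp [Tzz, Tw, Tr, gvec, gammaPlus, shiftS, hv, hv']

lemma Tzz_eq_zero_of_p2_eq_zero (a : Act) {v' v : TwoV m1 m2} (hv : v.2 = 0)
    (hv' : v'.2 ≠ 0) : Tzz m1 m2 p1 0 q a v' v = 0 := by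
  cases a <;> simp [Tzz, Tw, Tr, gvec, gammaPlus, shiftS, hv, hv']

lemma ginit_nonneg (hp1 : 0 ≤ p1 ∧ p1 ≤ 1) (hp2 : 0 ≤ p2 ∧ p2 ≤ 1) : 0 ≤ ginit m1 m2 p1 p2 :=
  fun v => by
    simp only [ginit, gvec, Pi.zero_apply]
    apply_rules [mul_nonneg, ite_nonneg, le_refl, sub_nonneg.2, hp1.1, hp1.2, hp2.1, hp2.2]

lemma sum_ginit : ∑ v, ginit m1 m2 p1 p2 v = 1 := by
  simp only [ginit, Fintype.sum_prod_type, ← mul_sum, ← sum_mul, gvec_sum, one_mul]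

lemma ValidDec.le_one {d : TwoV m1 m2 → Act → ℝ} (hd : ValidDec d) (v : TwoV m1 m2) (a : Act) :
    d v a ≤ 1 :=
  hd.2 v ▸ single_le_sum (fun b _ => hd.1 v b) (mem_univ a)

lemma Qmat_nonneg (hp1 : 0 ≤ p1 ∧ p1 ≤ 1) (hp2 : 0 ≤ p2 ∧ p2 ≤ 1) (hq : 0 ≤ q ∧ q ≤ 1)
    {d : TwoV m1 m2 → Act → ℝ} (hd : ∀ v a, 0 ≤ d v a) (v' v : TwoV m1 m2) :
    0 ≤ Qmat m1 m2 p1 p2 q d v' v := by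
  simp only [Qmat, of_apply]
  exact sum_nonneg fun a _ => mul_nonneg (Tzz_nonneg hp1 hp2 hq a v' v) (hd v a)

lemma one_vecMul_Qmat {d : TwoV m1 m2 → Act → ℝ} (hd : ValidDec d) (v : TwoV m1 m2) :
    (1 ᵥ* Qmat m1 m2 p1 p2 q d) v =
      1 - if 1 ≤ (v.1 : ℕ) ∧ 1 ≤ (v.2 : ℕ) then q * d v .swap else 0 := by
  simp only [one_vecMul_apply, Qmat, of_apply]
  rw [sum_comm]
  simp only [← sum_mul, ← one_vecMul_apply, one_vecMul_Tzz, sub_mul, one_mul, sum_sub_distrib,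
    hd.2 v, ite_and, ite_mul, zero_mul, sum_ite_eq']
  simp

lemma Qmat_mulVec (d : TwoV m1 m2 → Act → ℝ) (x : TwoV m1 m2 → ℝ) :
    Qmat m1 m2 p1 p2 q d *ᵥ x = ∑ a, Tzz m1 m2 p1 p2 q a *ᵥ fun v => d v a * x v := by
  ext v'
  simp only [mulVec, dotProduct, Qmat, of_apply, Finset.sum_apply, sum_mul, mul_assoc]
  exact sum_comm

end Model

section LinearProgram

variable {m1 m2 : ℕ} {p1 p2 q : ℝ} {x : TwoV m1 m2 → ℝ} {w : Act → TwoV m1 m2 → ℝ}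

lemma Feas11.w_nonneg (hf : Feas11 m1 m2 p1 p2 q x w) (a : Act) : 0 ≤ w a :=
  fun v => (hf.1 a v).1

lemma Feas11.sum_w (hf : Feas11 m1 m2 p1 p2 q x w) : ∑ a, w a = x :=
  funext fun v => by rw [Finset.sum_apply, hf.2.2 v]

lemma Feas11.x_nonneg (hf : Feas11 m1 m2 p1 p2 q x w) : 0 ≤ x :=
  hf.sum_w ▸ sum_nonneg fun a _ => hf.w_nonneg a

lemma Feas11.balance (hf : Feas11 m1 m2 p1 p2 q x w) :
    x - ∑ a, Tzz m1 m2 p1 p2 q a *ᵥ w a = ginit m1 m2 p1 p2 :=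
  funext fun v => by rw [Pi.sub_apply, Finset.sum_apply, hf.2.1 v]

/-- Weak LP duality, with the indicator of a closed set of states from which no swap can succeed
as dual certificate. -/
lemma Feas11.indicator_dotProduct_ginit_nonpos (hf : Feas11 m1 m2 p1 p2 q x w)
    (hp1 : 0 ≤ p1 ∧ p1 ≤ 1) (hp2 : 0 ≤ p2 ∧ p2 ≤ 1) (hq : 0 ≤ q ∧ q ≤ 1)
    {S : Set (TwoV m1 m2)} (hclosed : ∀ a, ∀ v ∈ S, ∀ v' ∉ S, Tzz m1 m2 p1 p2 q a v' v = 0)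
    (hstoch : ∀ a, ∀ v ∈ S, (1 ᵥ* Tzz m1 m2 p1 p2 q a) v = 1) :
    S.indicator 1 ⬝ᵥ ginit m1 m2 p1 p2 ≤ 0 := by
  refine dotProduct_nonpos_of_le_vecMul hf.w_nonneg hf.sum_w hf.balance fun a v => ?_
  by_cases hv : v ∈ S
  · rw [Set.indicator_of_mem hv, Pi.one_apply, ← hstoch a v hv, one_vecMul_apply]
    refine le_of_eq (sum_congr rfl fun v' _ => ?_)
    by_cases hv' : v' ∈ S
    · rw [Set.indicator_of_mem hv', Pi.one_apply, one_mul]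
    · rw [Set.indicator_of_notMem hv', zero_mul, hclosed a v hv v' hv']
  · rw [Set.indicator_of_notMem hv]
    exact vecMul_nonneg (Tzz_nonneg hp1 hp2 hq a)
      (Set.indicator_nonneg fun _ _ => zero_le_one) v

lemma Feas11.q_pos (hf : Feas11 m1 m2 p1 p2 q x w)
    (hp1 : 0 ≤ p1 ∧ p1 ≤ 1) (hp2 : 0 ≤ p2 ∧ p2 ≤ 1) (hq : 0 ≤ q ∧ q ≤ 1) : 0 < q := by
  refine hq.1.lt_of_ne' fun hq0 => ?_
  subst hq0
  have h := hf.indicator_dotProduct_ginit_nonpos hp1 hp2 hq (S := Set.univ)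
    (fun _ _ _ _ hv' => absurd trivial hv') (fun a v _ => by simp [one_vecMul_Tzz])
  rw [Set.indicator_univ, one_dotProduct, sum_ginit] at h
  norm_num at h

lemma Feas11.p1_pos (hf : Feas11 m1 m2 p1 p2 q x w)
    (hp1 : 0 ≤ p1 ∧ p1 ≤ 1) (hp2 : 0 ≤ p2 ∧ p2 ≤ 1) (hq : 0 ≤ q ∧ q ≤ 1) : 0 < p1 := by
  refine hp1.1.lt_of_ne' fun hp0 => ?_
  subst hp0
  have h := hf.indicator_dotProduct_ginit_nonpos hp1 hp2 hq (S := {v | v.1 = 0})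
    (fun a _ hv _ hv' => Tzz_eq_zero_of_p1_eq_zero a hv hv')
    (fun a v hv => by simp [one_vecMul_Tzz, show v.1 = 0 from hv])
  have hmass : {v : TwoV m1 m2 | v.1 = 0}.indicator 1 ⬝ᵥ ginit m1 m2 0 p2 = 1 := by
    rw [← sum_ginit (m1 := m1) (m2 := m2) (p1 := 0) (p2 := p2)]
    refine sum_congr rfl fun v _ => ?_
    by_cases hv : v.1 = 0 <;> simp [hv, ginit, gvec]
  linarith

lemma Feas11.p2_pos (hf : Feas11 m1 m2 p1 p2 q x w)
    (hp1 : 0 ≤ p1 ∧ p1 ≤ 1) (hp2 : 0 ≤ p2 ∧ p2 ≤ 1) (hq : 0 ≤ q ∧ q ≤ 1) : 0 < p2 := by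
  refine hp2.1.lt_of_ne' fun hp0 => ?_
  subst hp0
  have h := hf.indicator_dotProduct_ginit_nonpos hp1 hp2 hq (S := {v | v.2 = 0})
    (fun a _ hv _ hv' => Tzz_eq_zero_of_p2_eq_zero a hv hv')
    (fun a v hv => by simp [one_vecMul_Tzz, show v.2 = 0 from hv])
  have hmass : {v : TwoV m1 m2 | v.2 = 0}.indicator 1 ⬝ᵥ ginit m1 m2 p1 0 = 1 := by
    rw [← sum_ginit (m1 := m1) (m2 := m2) (p1 := p1) (p2 := 0)]
    refine sum_congr rfl fun v _ => ?_
    by_cases hv : v.2 = 0 <;> simp [hv, ginit, gvec]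
  linarith

lemma Feas11.validDec_ite (hf : Feas11 m1 m2 p1 p2 q x w) {R : Set (TwoV m1 m2)}
    [DecidablePred (· ∈ R)] (hR : ∀ v ∈ R, x v ≠ 0) :
    ValidDec fun v a => if v ∈ R then w a v / x v else 5⁻¹ := by
  refine ⟨fun v a => ?_, fun v => ?_⟩ <;> by_cases hv : v ∈ R <;> simp only [hv, if_true, if_false]
  · exact div_nonneg (hf.1 a v).1 (hf.x_nonneg v)
  · norm_num
  · rw [← sum_div, hf.2.2 v, div_self (hR v hv)]
  · rw [sum_const, card_univ, show Fintype.card Act = 5 from rfl]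
    norm_num

lemma Feas11.eq_ginit_add_mulVec (hf : Feas11 m1 m2 p1 p2 q x w) :
    x = ginit m1 m2 p1 p2 + Qmat m1 m2 p1 p2 q (fun v a => w a v / x v) *ᵥ x := by
  have hw : ∀ a, (fun v => w a v / x v * x v) = w a := fun a => funext fun v =>
    div_mul_cancel_of_imp fun hx => le_antisymm (hx ▸ (hf.1 a v).2) (hf.1 a v).1
  rw [Qmat_mulVec]
  simp only [hw, ← hf.balance, sub_add_cancel]

end LinearProgram

section Policy

variable {m1 m2 : ℕ} {p1 p2 q : ℝ} {x : TwoV m1 m2 → ℝ} {w : Act → TwoV m1 m2 → ℝ}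

lemma feas11_of_validDec (hp1 : 0 ≤ p1 ∧ p1 ≤ 1) (hp2 : 0 ≤ p2 ∧ p2 ≤ 1) (hq : 0 ≤ q ∧ q ≤ 1)
    {d : TwoV m1 m2 → Act → ℝ} (hd : ValidDec d)
    (ht : Tendsto (Qmat m1 m2 p1 p2 q d ^ ·) atTop (𝓝 0)) :
    Feas11 m1 m2 p1 p2 q ((1 - Qmat m1 m2 p1 p2 q d)⁻¹ *ᵥ ginit m1 m2 p1 p2)
      (fun a v => d v a * ((1 - Qmat m1 m2 p1 p2 q d)⁻¹ *ᵥ ginit m1 m2 p1 p2) v) := by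
  set Q := Qmat m1 m2 p1 p2 q d
  set x := (1 - Q)⁻¹ *ᵥ ginit m1 m2 p1 p2
  have hx : 0 ≤ x := ge_of_tendsto' (tendsto_geom_sum_mulVec_of_tendsto_pow ht _) fun n =>
    sum_nonneg fun k _ => mulVec_nonneg (pow_apply_nonneg (Qmat_nonneg hp1 hp2 hq hd.1) k)
      (ginit_nonneg hp1 hp2)
  have hbal : x - Q *ᵥ x = ginit m1 m2 p1 p2 := by
    conv_lhs => enter [1]; rw [← one_mulVec x]
    rw [← sub_mulVec, mulVec_mulVec, mul_nonsing_inv _ (isUnit_det_one_sub_of_tendsto_pow ht),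
      one_mulVec]
  refine ⟨fun a v => ⟨mul_nonneg (hd.1 v a) (hx v), mul_le_of_le_one_left (hx v) (hd.le_one v a)⟩,
    fun v' => ?_, fun v => by rw [← sum_mul, hd.2 v, one_mul]⟩
  rw [← Finset.sum_apply, ← Qmat_mulVec]
  exact congrFun hbal v'

lemma one_vecMul_Qmat_le_one (hq : 0 ≤ q ∧ q ≤ 1) {d : TwoV m1 m2 → Act → ℝ} (hd : ValidDec d) :
    1 ᵥ* Qmat m1 m2 p1 p2 q d ≤ 1 := fun v => by
  rw [one_vecMul_Qmat hd, Pi.one_apply, sub_le_self_iff]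
  split_ifs
  exacts [mul_nonneg hq.1 (hd.1 v _), le_rfl]

/-- From the state in which both links are fresh, a swap succeeds with probability `q`, and under
the uniform rule every state reaches it in one step with probability at least `p₁ p₂ / 5`. -/
lemma exists_one_vecMul_Qmat_pow_lt_one (hp1 : 0 ≤ p1 ∧ p1 ≤ 1) (hp2 : 0 ≤ p2 ∧ p2 ≤ 1)
    (hq : 0 ≤ q ∧ q ≤ 1) (hp1' : 0 < p1) (hp2' : 0 < p2) (hq' : 0 < q)
    {d : TwoV m1 m2 → Act → ℝ} (hd : ValidDec d) {R : Set (TwoV m1 m2)}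
    (hR : ∀ j ∈ R, ∃ k, (1 ᵥ* Qmat m1 m2 p1 p2 q d ^ k) j < 1)
    (hunif : ∀ j ∉ R, ∀ a, d j a = 5⁻¹) (j : TwoV m1 m2) :
    ∃ k, (1 ᵥ* Qmat m1 m2 p1 p2 q d ^ k) j < 1 := by
  set Q := Qmat m1 m2 p1 p2 q d
  have hQ := Qmat_nonneg hp1 hp2 hq hd.1
  have hcol := one_vecMul_Qmat_le_one (p1 := p1) (p2 := p2) hq hd
  by_cases hj : j ∈ R
  · exact hR j hj
  let fresh : TwoV m1 m2 := (1, 1)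
  obtain ⟨k, hk⟩ : ∃ k, (1 ᵥ* Q ^ k) fresh < 1 := by
    by_cases h : fresh ∈ R
    · exact hR _ h
    · refine ⟨1, ?_⟩
      rw [pow_one, one_vecMul_Qmat hd, if_pos (by simp [fresh]), hunif _ h]
      linarith
  refine ⟨k + 1, one_vecMul_pow_succ_lt_one hQ hcol hk ?_⟩
  calc 0 < Tzz m1 m2 p1 p2 q .a11 fresh j * d j .a11 := by
        rw [hunif j hj]
        simp [Tzz, Tr, fresh]
        positivity
    _ ≤ Q fresh j := single_le_sum (f := fun a => Tzz m1 m2 p1 p2 q a fresh j * d j a)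
        (fun a _ => mul_nonneg (Tzz_nonneg hp1 hp2 hq a fresh j) (hd.1 j a)) (mem_univ _)

theorem Feas11.exists_validDec (hf : Feas11 m1 m2 p1 p2 q x w)
    (hp1 : 0 ≤ p1 ∧ p1 ≤ 1) (hp2 : 0 ≤ p2 ∧ p2 ≤ 1) (hq : 0 ≤ q ∧ q ≤ 1) :
    ∃ d, ValidDec d ∧ Tendsto (Qmat m1 m2 p1 p2 q d ^ ·) atTop (𝓝 0) ∧
      (1 - Qmat m1 m2 p1 p2 q d)⁻¹ *ᵥ ginit m1 m2 p1 p2 ≤ x := by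
  classical
  set g := ginit m1 m2 p1 p2
  have hg : 0 ≤ g := ginit_nonneg hp1 hp2
  set Q₀ := Qmat m1 m2 p1 p2 q fun v a => w a v / x v
  have hQ₀ : ∀ i j, 0 ≤ Q₀ i j :=
    Qmat_nonneg hp1 hp2 hq fun v a => div_nonneg (hf.1 a v).1 (hf.x_nonneg v)
  have hsum : ∀ n, ∑ k ∈ range n, Q₀ ^ k *ᵥ g ≤ x :=
    sum_range_pow_mulVec_le hQ₀ hf.x_nonneg hf.eq_ginit_add_mulVec
  -- off the set `R` of states reachable from `g` under `Q₀`, the rule `w / x` may cycle forever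
  -- without absorption, so it is replaced there by the uniform rule
  set R := {v | ∃ k, (Q₀ ^ k *ᵥ g) v ≠ 0}
  have hxR : ∀ v ∈ R, x v ≠ 0 := fun v ⟨k, hk⟩ hx0 => hk <| le_antisymm
    (hx0 ▸ pow_mulVec_le_of_sum_range_le hQ₀ hg hsum k v)
    (mulVec_nonneg (pow_apply_nonneg hQ₀ k) hg v)
  set d : TwoV m1 m2 → Act → ℝ := fun v a => if v ∈ R then w a v / x v else 5⁻¹
  have hd : ValidDec d := hf.validDec_ite hxR
  set Q := Qmat m1 m2 p1 p2 q d
  have hQ : ∀ i j, 0 ≤ Q i j := Qmat_nonneg hp1 hp2 hq hd.1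
  have hpow : ∀ k, Q ^ k *ᵥ g = Q₀ ^ k *ᵥ g := pow_mulVec_eq_of_col_eq fun k v hv v' => by
    simp [Q, Q₀, Qmat, d, show v ∈ R from ⟨k, hv⟩]
  have hmass := tendsto_sum_pow_mulVec_of_sum_range_le hQ hg fun n => by
    simpa only [hpow] using hsum n
  have ht : Tendsto (Q ^ ·) atTop (𝓝 0) := by
    refine tendsto_pow_atTop_nhds_zero_of_one_vecMul hQ (one_vecMul_Qmat_le_one hq hd)
      (exists_one_vecMul_Qmat_pow_lt_one hp1 hp2 hq (hf.p1_pos hp1 hp2 hq) (hf.p2_pos hp1 hp2 hq)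
        (hf.q_pos hp1 hp2 hq) hd (R := R) (fun j ⟨k, hk⟩ => ?_) fun j hj a => if_neg hj)
    refine exists_one_vecMul_pow_lt_one hQ hg hmass (k₀ := k) ?_
    rw [hpow]
    exact (mulVec_nonneg (pow_apply_nonneg hQ₀ k) hg j).lt_of_ne' hk
  exact ⟨d, hd, ht, le_of_tendsto' (tendsto_geom_sum_mulVec_of_tendsto_pow ht g) fun n => by
    simpa only [hpow] using hsum n⟩

end Policy

/-- **Linear program for the optimal expected waiting time for two elementary links.**
The infimum, over decision functions under which absorption is certain, of the expected
time to absorption `⟨γ|(I - Q^d)⁻¹|g_{p₁}⟩⊗|g_{p₂}⟩` equals the optimal value of the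
stated linear program, and every feasible point defines a stationary policy via
`d(0,m₁,m₂)(a) = ⟨0,m₁,m₂|w_a⟩/⟨0,m₁,m₂|x⟩`. -/
theorem lp_two_links_waiting_time (m1 m2 : ℕ) (p1 p2 q : ℝ)
    (hp1 : 0 ≤ p1 ∧ p1 ≤ 1) (hp2 : 0 ≤ p2 ∧ p2 ≤ 1) (hq : 0 ≤ q ∧ q ≤ 1) :
    (sInf {L : ℝ | ∃ d : TwoV m1 m2 → Act → ℝ, ValidDec d ∧
        Tendsto (fun k : ℕ => Qmat m1 m2 p1 p2 q d ^ k) atTop (nhds 0) ∧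
        L = ∑ v' : TwoV m1 m2,
          ((1 - Qmat m1 m2 p1 p2 q d)⁻¹).mulVec (ginit m1 m2 p1 p2) v'}
      = sInf {c : ℝ | ∃ (x : TwoV m1 m2 → ℝ) (w : Act → TwoV m1 m2 → ℝ),
          Feas11 m1 m2 p1 p2 q x w ∧ c = ∑ v : TwoV m1 m2, x v}) ∧
    (∀ (x : TwoV m1 m2 → ℝ) (w : Act → TwoV m1 m2 → ℝ),
      Feas11 m1 m2 p1 p2 q x w →
      ∀ vv, 0 < x vv → (∀ a, 0 ≤ w a vv / x vv) ∧ ∑ a : Act, w a vv / x vv = 1) := by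
  refine ⟨csInf_eq_csInf_of_forall_exists_le ?_ ?_, fun x w hf v hv => ?_⟩
  · rintro _ ⟨d, hd, ht, rfl⟩
    exact ⟨_, ⟨_, _, feas11_of_validDec hp1 hp2 hq hd ht, rfl⟩, le_rfl⟩
  · rintro _ ⟨x, w, hf, rfl⟩
    obtain ⟨d, hd, ht, hle⟩ := hf.exists_validDec hp1 hp2 hq
    exact ⟨_, ⟨d, hd, ht, rfl⟩, sum_le_sum fun v _ => hle v⟩
  · exact ⟨fun a => div_nonneg (hf.1 a v).1 hv.le, by rw [← sum_div, hf.2.2 v, div_self hv.ne']⟩
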